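/- Let G be a cycle on state nodes 1,...,n (n ≥ 4) with two input nodes adjacent to non-adjacent state nodes k and l. Then with α = V_S \ {k, l}, the set N(α) \ α = {k, l}, and both k and l have exactly two neighbors in α (they are sharing nodes). Hence G is not strongly sign controllable. -/

import Mathlib

open scoped Classical

/-- Dedicated node of `α` in `G`: not in `α`, exactly one neighbor in `α`. -/
def ded {V : Type} (G : SimpleGraph V) (α : Finset V) (v : V) : Prop :=
  v ∉ α ∧ (α.filter (G.Adj v)).card = 1

/-- Cycle graph on state nodes `Fin n` with two input nodes adjacent to `k` and `l`. -/
def cycleTwoInput (n : ℕ) (k l : Fin n) : SimpleGraph (Fin n ⊕ Fin 2) :=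
  SimpleGraph.fromRel (fun x y =>
    match x, y with
    | Sum.inl i, Sum.inl j => (i : ℕ) + 1 = (j : ℕ) ∨ ((i : ℕ) = 0 ∧ (j : ℕ) = n - 1)
    | Sum.inr u, Sum.inl j => (u = 0 ∧ j = k) ∨ (u = 1 ∧ j = l)
    | _, _ => False)

/-!
Among state nodes the graph is Mathlib's `cycleGraph n`, and the input nodes are adjacent only to
`k` and `l`. So outside `α = V_S \ {k, l}` only `k` and `l` have neighbours in `α`; as they are
not adjacent, each has both of its (for `n ≥ 3` distinct) cycle neighbours in `α`.
-/

open SimpleGraph Finset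

lemma SimpleGraph.filter_adj_univ_erase_erase {V : Type*} [Fintype V] [DecidableEq V]
    (G : SimpleGraph V) {i j : V} (hij : ¬ G.Adj i j) [DecidablePred (G.Adj i)]
    [Fintype (G.neighborSet i)] :
    ((univ.erase i).erase j).filter (G.Adj i) = G.neighborFinset i := by
  ext w
  simp only [mem_filter, mem_erase, mem_univ, mem_neighborFinset, and_true]
  exact ⟨And.right, fun h => ⟨⟨fun e => hij (e ▸ h), h.ne'⟩, h⟩⟩

namespace cycleTwoInput

variable {n : ℕ} {k l : Fin n}

lemma adj_inl_inl {i j : Fin n} :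
    (cycleTwoInput n k l).Adj (.inl i) (.inl j) ↔ (cycleGraph n).Adj i j := by
  rw [cycleGraph_adj']
  simp only [cycleTwoInput, fromRel_adj, ne_eq, Sum.inl.injEq, Fin.ext_iff]
  have := i.isLt
  have := j.isLt
  rcases le_or_gt i j with hij | hij <;> rcases le_or_gt j i with hji | hji <;>
    simp only [Fin.coe_sub_iff_le.mpr, Fin.coe_sub_iff_lt.mpr, hij, hji] <;> omega

lemma adj_inr_inl {u : Fin 2} {j : Fin n} :
    (cycleTwoInput n k l).Adj (.inr u) (.inl j) ↔ (u = 0 ∧ j = k) ∨ (u = 1 ∧ j = l) := by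
  simp [cycleTwoInput]

lemma filter_adj_inr_eq_empty {β : Finset (Fin n)} (hk : k ∉ β) (hl : l ∉ β) (u : Fin 2) :
    (β.image Sum.inl).filter ((cycleTwoInput n k l).Adj (.inr u)) = ∅ := by
  rw [filter_image, image_eq_empty, filter_eq_empty_iff]
  intro j hj hadj
  rcases adj_inr_inl.mp hadj with ⟨-, rfl⟩ | ⟨-, rfl⟩ <;> contradiction

lemma card_filter_adj_inl (hn : 3 ≤ n) {i j : Fin n} (hij : ¬ (cycleGraph n).Adj i j) :
    ((((univ.erase i).erase j).image Sum.inl).filter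
      ((cycleTwoInput n k l).Adj (.inl i))).card = 2 := by
  obtain ⟨m, rfl⟩ : ∃ m, n = m + 3 := ⟨n - 3, by omega⟩
  simp only [filter_image, adj_inl_inl]
  rw [card_image_of_injective _ Sum.inl_injective, (cycleGraph _).filter_adj_univ_erase_erase hij,
    card_neighborFinset_eq_degree, cycleGraph_degree_three_le]

lemma card_filter_adj_inl_left (hn : 3 ≤ n) (hkl : ¬ (cycleGraph n).Adj k l) :
    ((((univ.erase k).erase l).image Sum.inl).filter
      ((cycleTwoInput n k l).Adj (.inl k))).card = 2 :=
  card_filter_adj_inl hn hkl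

lemma card_filter_adj_inl_right (hn : 3 ≤ n) (hkl : ¬ (cycleGraph n).Adj k l) :
    ((((univ.erase k).erase l).image Sum.inl).filter
      ((cycleTwoInput n k l).Adj (.inl l))).card = 2 := by
  rw [erase_right_comm]
  exact card_filter_adj_inl hn (mt Adj.symm hkl)

lemma eq_or_eq_of_inl_notMem {i : Fin n}
    (hi : (.inl i : Fin n ⊕ Fin 2) ∉ ((univ.erase k).erase l).image Sum.inl) :
    i = k ∨ i = l := by
  simp only [mem_image, mem_erase, mem_univ, and_true, Sum.inl.injEq, exists_eq_right] at hi
  tauto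

lemma setOf_notMem_exists_adj_eq (hn : 3 ≤ n) (hkl : ¬ (cycleGraph n).Adj k l) :
    {v | v ∉ ((univ.erase k).erase l).image Sum.inl ∧
      ∃ w ∈ ((univ.erase k).erase l).image Sum.inl, (cycleTwoInput n k l).Adj v w} =
      {.inl k, .inl l} := by
  ext (i | u)
  · simp only [Set.mem_ofPred_eq, Set.mem_insert_iff, Set.mem_singleton_iff, Sum.inl.injEq,
      ← filter_nonempty_iff, ← card_pos]
    refine ⟨fun h => eq_or_eq_of_inl_notMem h.1, ?_⟩
    rintro (rfl | rfl)
    · simp [card_filter_adj_inl_left hn hkl]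
    · simp [card_filter_adj_inl_right hn hkl]
  · rw [Set.mem_ofPred_eq, ← filter_nonempty_iff, filter_adj_inr_eq_empty (by simp) (by simp)]
    simp

lemma not_exists_ded (hn : 3 ≤ n) (hkl : ¬ (cycleGraph n).Adj k l) :
    ¬ ∃ v, ded (cycleTwoInput n k l) (((univ.erase k).erase l).image Sum.inl) v := by
  rintro ⟨i | u, hv, hcard⟩
  · rcases eq_or_eq_of_inl_notMem hv with rfl | rfl
    · simp [card_filter_adj_inl_left hn hkl] at hcard
    · simp [card_filter_adj_inl_right hn hkl] at hcard
  · simp [filter_adj_inr_eq_empty] at hcard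

end cycleTwoInput

theorem stmt5_general (n : ℕ) (hn : 4 ≤ n) (k l : Fin n)
    (hnadj : ¬ (cycleTwoInput n k l).Adj (Sum.inl k) (Sum.inl l)) :
    -- with α = V_S \ {k, l}:
    ({v : Fin n ⊕ Fin 2 |
        v ∉ (((Finset.univ.erase k).erase l).image Sum.inl : Finset (Fin n ⊕ Fin 2)) ∧
        ∃ w ∈ (((Finset.univ.erase k).erase l).image Sum.inl : Finset (Fin n ⊕ Fin 2)),
          (cycleTwoInput n k l).Adj v w}
      = {Sum.inl k, Sum.inl l}) ∧
    (((((Finset.univ.erase k).erase l).image Sum.inl : Finset (Fin n ⊕ Fin 2)).filter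
        ((cycleTwoInput n k l).Adj (Sum.inl k))).card = 2) ∧
    (((((Finset.univ.erase k).erase l).image Sum.inl : Finset (Fin n ⊕ Fin 2)).filter
        ((cycleTwoInput n k l).Adj (Sum.inl l))).card = 2) ∧
    (¬ ∃ v, ded (cycleTwoInput n k l)
        (((Finset.univ.erase k).erase l).image Sum.inl : Finset (Fin n ⊕ Fin 2)) v) ∧
    -- hence G is not strongly sign controllable
    ¬ (∀ β : Finset (Fin n), β.Nonempty → k ∉ β → l ∉ β →
        ∃ v, ded (cycleTwoInput n k l) (β.image Sum.inl) v) := by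
  have hn3 : 3 ≤ n := by omega
  have hkl : ¬ (cycleGraph n).Adj k l := cycleTwoInput.adj_inl_inl.not.mp hnadj
  have card_k := cycleTwoInput.card_filter_adj_inl_left hn3 hkl
  refine ⟨cycleTwoInput.setOf_notMem_exists_adj_eq hn3 hkl, card_k,
    cycleTwoInput.card_filter_adj_inl_right hn3 hkl, cycleTwoInput.not_exists_ded hn3 hkl,
    fun H => cycleTwoInput.not_exists_ded hn3 hkl (H _ ?_ (by simp) (by simp))⟩
  obtain ⟨w, hw⟩ := card_pos.mp (card_k ▸ two_pos)
  exact image_nonempty.mp ⟨w, (mem_filter.mp hw).1⟩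

theorem stmt5 (n : ℕ) (hn : 4 ≤ n) (k l : Fin n) (hkl : k ≠ l)
    (hnadj : ¬ (cycleTwoInput n k l).Adj (Sum.inl k) (Sum.inl l)) :
    -- with α = V_S \ {k, l}:
    ({v : Fin n ⊕ Fin 2 |
        v ∉ (((Finset.univ.erase k).erase l).image Sum.inl : Finset (Fin n ⊕ Fin 2)) ∧
        ∃ w ∈ (((Finset.univ.erase k).erase l).image Sum.inl : Finset (Fin n ⊕ Fin 2)),
          (cycleTwoInput n k l).Adj v w}
      = {Sum.inl k, Sum.inl l}) ∧
    (((((Finset.univ.erase k).erase l).image Sum.inl : Finset (Fin n ⊕ Fin 2)).filter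
        ((cycleTwoInput n k l).Adj (Sum.inl k))).card = 2) ∧
    (((((Finset.univ.erase k).erase l).image Sum.inl : Finset (Fin n ⊕ Fin 2)).filter
        ((cycleTwoInput n k l).Adj (Sum.inl l))).card = 2) ∧
    (¬ ∃ v, ded (cycleTwoInput n k l)
        (((Finset.univ.erase k).erase l).image Sum.inl : Finset (Fin n ⊕ Fin 2)) v) ∧
    -- hence G is not strongly sign controllable
    ¬ (∀ β : Finset (Fin n), β.Nonempty → k ∉ β → l ∉ β →
        ∃ v, ded (cycleTwoInput n k l) (β.image Sum.inl) v) :=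
  stmt5_general n hn k l hnadj
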